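/- Let (M, g) be a compact κ-dimensional Riemannian manifold with boundary, and suppose for some c > 0 and δ_0 > 0 that |B_r(z)| ≥ c·r^κ for all z ∈ M^δ := {p : d_M(p, ∂M) > δ} and all 0 < r ≤ δ < δ_0. Then any two points p, q in the same connected component of M^δ can be joined by a piecewise geodesic path lying in M^{δ/2} of length at most δ·N_δ, where N_δ = max(4, 2^κ·|M|/(c·δ^κ)). -/
import Mathlib

open Real Set Metric MeasureTheory

lemma exists_chain_aux {M : Type*} [MetricSpace M] {C : Set M} (hC : IsConnected C)
    {p q : M} (hp : p ∈ C) (hq : q ∈ C) {ε : ℝ} (hε : 0 < ε) :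
    ∃ (T : ℕ) (y : ℕ → M), y 0 = p ∧ (∀ t, y t ∈ C) ∧
      (∀ t, dist (y t) (y (t + 1)) ≤ ε) ∧ (∀ t, T ≤ t → y t = q) := by
  set R : Set M := {x | ∃ (n : ℕ) (y : ℕ → M), y 0 = p ∧ (∀ t, y t ∈ C) ∧
      (∀ t, dist (y t) (y (t + 1)) ≤ ε) ∧ (∀ t, n ≤ t → y t = x)} with hRdef
  have hpR : p ∈ R := ⟨0, fun _ => p, rfl, fun _ => hp, by simp [hε.le], fun _ _ => rfl⟩
  have key : ∀ x ∈ R, ∀ x' ∈ C, dist x x' ≤ ε → x' ∈ R := by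
    rintro x ⟨n, y, hy0, hyC, hystep, hyend⟩ x' hx'C hdist
    refine ⟨n + 1, fun t => if t ≤ n then y t else x', by simp [hy0], ?_, ?_, ?_⟩
    · intro t; by_cases h : t ≤ n <;> simp [h, hyC t, hx'C]
    · intro t
      rcases lt_trichotomy t n with h | h | h
      · have h1 : t + 1 ≤ n := by omega
        simp [h.le, h1, hystep t]
      · subst h; simp [hyend t le_rfl, hdist, Nat.lt_irrefl]
      · have h1 : ¬ t ≤ n := by omega
        have h2 : ¬ t + 1 ≤ n := by omega
        simp [h1, h2, hε.le]
    · intro t ht; have : ¬ t ≤ n := by omega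
      simp [this]
  by_contra hcon
  push_neg at hcon
  have hqR : q ∉ R := by
    rintro ⟨n, y, hy0, hyC, hystep, hyend⟩
    obtain ⟨t, ht, hne⟩ := hcon n y hy0 hyC hystep
    exact hne (hyend t ht)
  obtain ⟨x, hxC, hxUV⟩ := hC.isPreconnected (⋃ z ∈ R, ball z ε) (⋃ z ∈ C \ R, ball z ε)
    (isOpen_biUnion fun _ _ => isOpen_ball) (isOpen_biUnion fun _ _ => isOpen_ball)
    (by
      intro x hxC
      by_cases h : x ∈ R
      · exact Or.inl (mem_biUnion h (mem_ball_self hε))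
      · exact Or.inr (mem_biUnion ⟨hxC, h⟩ (mem_ball_self hε)))
    ⟨p, hp, mem_biUnion hpR (mem_ball_self hε)⟩
    ⟨q, hq, mem_biUnion ⟨hq, hqR⟩ (mem_ball_self hε)⟩
  obtain ⟨hxU, hxV⟩ := hxUV
  obtain ⟨z₁, hz₁R, hxz₁⟩ := mem_iUnion₂.1 hxU
  obtain ⟨z₂, hz₂, hxz₂⟩ := mem_iUnion₂.1 hxV
  have hxR : x ∈ R := key z₁ hz₁R x hxC (by rw [dist_comm]; exact (mem_ball.1 hxz₁).le)
  exact hz₂.2 (key x hxR z₂ hz₂.1 (dist_comm x z₂ ▸ (mem_ball.1 hxz₂).le))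

lemma prune_chain {M : Type*} [MetricSpace M] {ε θ : ℝ} (hθ : 0 ≤ θ) (q : M) :
    ∀ T : ℕ, ∀ y : ℕ → M, (∀ t, dist (y t) (y (t + 1)) ≤ ε) → (∀ t, T ≤ t → y t = q) →
    ∃ (m : ℕ) (z : ℕ → M), z 0 = y 0 ∧ dist (z m) q ≤ θ ∧
      (∀ k ≤ m, ∃ s ≤ T, z k = y s) ∧
      (∀ k < m, dist (z k) (z (k + 1)) ≤ θ + ε) ∧
      (∀ j k, j < k → k ≤ m → θ < dist (z j) (z k)) := by
  intro T
  induction T using Nat.strong_induction_on with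
  | _ T IH =>
    intro y hstep hend
    classical
    set P : ℕ → Prop := fun t => dist (y t) (y 0) ≤ θ with hPdef
    set L := Nat.findGreatest P T with hLdef
    have hP0 : P 0 := by simp [hPdef, hθ]
    have hPL : P L := by
      rcases Nat.eq_zero_or_pos L with h | h
      · rw [h]; exact hP0
      · exact Nat.findGreatest_of_ne_zero hLdef.symm (by omega)
    have hLT : L ≤ T := Nat.findGreatest_le T
    have hmax : ∀ t, L < t → t ≤ T → θ < dist (y t) (y 0) := by
      intro t h1 h2
      have := Nat.findGreatest_is_greatest (hLdef ▸ h1) h2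
      simpa [hPdef, not_le] using this
    by_cases hcase : L = T
    · refine ⟨0, fun _ => y 0, rfl, ?_, ?_, by omega, by omega⟩
      · have hyT : y T = q := hend T le_rfl
        show dist (y 0) q ≤ θ
        rw [← hyT, dist_comm]
        exact hcase ▸ hPL
      · exact fun k hk => ⟨0, Nat.zero_le _, rfl⟩
    · have hLltT : L < T := lt_of_le_of_ne hLT hcase
      set T' := T - (L + 1) with hT'def
      have hT'lt : T' < T := by omega
      set y' : ℕ → M := fun t => y (L + 1 + t) with hy'def
      have hstep' : ∀ t, dist (y' t) (y' (t + 1)) ≤ ε := by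
        intro t
        have : L + 1 + (t + 1) = (L + 1 + t) + 1 := by omega
        simp only [hy'def, this]
        exact hstep _
      have hend' : ∀ t, T' ≤ t → y' t = q := by
        intro t ht
        exact hend _ (by omega)
      obtain ⟨m', z', hz'0, hz'q, hidx, hcons, hsep⟩ := IH T' hT'lt y' hstep' hend'
      refine ⟨m' + 1, fun k => Nat.casesOn k (y 0) z', rfl, hz'q, ?_, ?_, ?_⟩
      · rintro (_ | k) hk
        · exact ⟨0, Nat.zero_le _, rfl⟩
        · obtain ⟨s, hs, hzs⟩ := hidx k (by omega)
          exact ⟨L + 1 + s, by omega, hzs⟩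
      · rintro (_ | k) hk
        · show dist (y 0) (z' 0) ≤ θ + ε
          rw [hz'0]
          calc dist (y 0) (y' 0) ≤ dist (y 0) (y L) + dist (y L) (y (L + 1)) := by
                have : y' 0 = y (L + 1) := by simp [hy'def]
                rw [this]; exact dist_triangle _ _ _
          _ ≤ θ + ε := add_le_add (dist_comm (y L) (y 0) ▸ hPL) (hstep L)
        · exact hcons k (by omega)
      · rintro (_ | j) (_ | k) hjk hkm
        · omega
        · obtain ⟨s, hs, hzs⟩ := hidx k (by omega)
          show θ < dist (y 0) (z' k)
          rw [hzs, hy'def, dist_comm]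
          exact hmax (L + 1 + s) (by omega) (by omega)
        · omega
        · exact hsep j k (by omega) (by omega)

lemma polygonal_path {M : Type*} [MetricSpace M]
    (hgeo : ∀ x y : M, ∃ γ : ℝ → M, γ 0 = x ∧ γ (dist x y) = y ∧
      ∀ s ∈ Set.Icc 0 (dist x y), ∀ t ∈ Set.Icc 0 (dist x y), dist (γ s) (γ t) = |s - t|)
    (n : ℕ) (hn : 0 < n) (w : ℕ → M) (δ : ℝ) (hδ : 0 ≤ δ)
    (hd : ∀ k, dist (w k) (w (k + 1)) ≤ δ) :
    ∃ γ : ℝ → M, LipschitzOnWith (Real.toNNReal (δ * n)) γ (Set.Icc 0 1) ∧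
      γ 0 = w 0 ∧ γ 1 = w n ∧
      ∀ s ∈ Set.Icc (0:ℝ) 1, ∃ k < n,
        dist (γ s) (w k) ≤ δ / 2 ∨ dist (γ s) (w (k + 1)) ≤ δ / 2 := by
  classical
  choose g hg0 hg1 hgiso using fun k => hgeo (w k) (w (k + 1))
  set d : ℕ → ℝ := fun k => dist (w k) (w (k + 1)) with hddef
  have hd0 : ∀ k, 0 ≤ d k := fun k => dist_nonneg
  set F : ℝ → M := fun u => g ⌊u⌋₊ ((u - ⌊u⌋₊) * d ⌊u⌋₊) with hFdef
  have hF : ∀ k : ℕ, ∀ u ∈ Set.Icc (k:ℝ) (k + 1), F u = g k ((u - k) * d k) := by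
    intro k u hu
    have hu0 : (0:ℝ) ≤ u := le_trans (Nat.cast_nonneg k) hu.1
    rcases lt_or_eq_of_le hu.2 with h | h
    · have hfl : ⌊u⌋₊ = k := by
        rw [Nat.floor_eq_iff hu0]
        exact ⟨hu.1, by push_cast; linarith⟩
      simp only [hFdef, hfl]
    · have hfl : ⌊u⌋₊ = k + 1 := by
        rw [h]; rw [show ((k:ℝ) + 1) = ((k + 1 : ℕ) : ℝ) by push_cast; ring]
        exact Nat.floor_natCast _
      have h1 : F u = g (k + 1) 0 := by
        rw [h] at hfl ⊢
        simp only [hFdef, hfl]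
        congr 1
        push_cast
        ring
      have h2 : g k ((u - k) * d k) = g k (d k) := by
        rw [h]; norm_num
      rw [h1, h2, hg0, hg1]
  have hFk : ∀ k : ℕ, F k = w k := by
    intro k
    have := hF k k ⟨le_refl _, by linarith⟩
    rw [this]
    simp [hg0 k]
  have hseg : ∀ k : ℕ, ∀ u ∈ Set.Icc (k:ℝ) (k + 1), ∀ v ∈ Set.Icc (k:ℝ) (k + 1),
      dist (F u) (F v) ≤ δ * |u - v| := by
    intro k u hu v hv
    rw [hF k u hu, hF k v hv]
    have hmem : ∀ x ∈ Set.Icc (k:ℝ) (k + 1), (x - k) * d k ∈ Set.Icc 0 (d k) := by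
      intro x hx
      constructor
      · exact mul_nonneg (by linarith [hx.1]) (hd0 k)
      · calc (x - k) * d k ≤ 1 * d k :=
              mul_le_mul_of_nonneg_right (by linarith [hx.2]) (hd0 k)
        _ = d k := one_mul _
    rw [hgiso k _ (hmem u hu) _ (hmem v hv)]
    rw [show (u - k) * d k - (v - k) * d k = (u - v) * d k by ring]
    rw [abs_mul, abs_of_nonneg (hd0 k)]
    rw [mul_comm]
    exact mul_le_mul_of_nonneg_right (hd k) (abs_nonneg _)
  have hglue : ∀ n' : ℕ, ∀ u ∈ Set.Icc (0:ℝ) n', ∀ v ∈ Set.Icc (0:ℝ) n',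
      u ≤ v → dist (F u) (F v) ≤ δ * (v - u) := by
    intro n'
    induction n' with
    | zero =>
      intro u hu v hv huv
      have : u = 0 := le_antisymm (by exact_mod_cast hu.2) hu.1
      have hv0 : v = 0 := le_antisymm (by exact_mod_cast hv.2) hv.1
      simp [this, hv0]
    | succ n' IH =>
      intro u hu v hv huv
      have hcast : ((n' + 1 : ℕ) : ℝ) = (n' : ℝ) + 1 := by push_cast; ring
      rw [hcast] at hu hv
      by_cases hvn : v ≤ (n' : ℝ)
      · exact IH u ⟨hu.1, le_trans huv hvn⟩ v ⟨hv.1, hvn⟩ huv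
      · push_neg at hvn
        by_cases hun : (n' : ℝ) ≤ u
        · exact le_trans (hseg n' u ⟨hun, hu.2⟩ v ⟨hvn.le, hv.2⟩)
            (by rw [abs_of_nonpos (by linarith)]; nlinarith)
        · push_neg at hun
          calc dist (F u) (F v) ≤ dist (F u) (F (n' : ℝ)) + dist (F (n' : ℝ)) (F v) :=
                dist_triangle _ _ _
          _ ≤ δ * ((n' : ℝ) - u) + δ * (v - (n' : ℝ)) := by
              refine add_le_add (IH u ⟨hu.1, hun.le⟩ (n' : ℝ) ⟨Nat.cast_nonneg _, le_refl _⟩ hun.le) ?_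
              exact le_trans (hseg n' (n' : ℝ) ⟨le_refl _, by linarith⟩ v ⟨hvn.le, hv.2⟩)
                (by rw [abs_of_nonpos (by linarith)]; nlinarith)
          _ = δ * (v - u) := by ring
  refine ⟨fun s => F (s * n), ?_, ?_, ?_, ?_⟩
  · apply LipschitzOnWith.of_dist_le_mul
    intro s hs t ht
    have hmem : ∀ x ∈ Set.Icc (0:ℝ) 1, x * n ∈ Set.Icc (0:ℝ) (n : ℝ) := by
      intro x hx
      constructor
      · exact mul_nonneg hx.1 (Nat.cast_nonneg n)
      · calc x * n ≤ 1 * n := mul_le_mul_of_nonneg_right hx.2 (Nat.cast_nonneg n)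
        _ = (n : ℝ) := one_mul _
    have hC : (Real.toNNReal (δ * n) : ℝ) = δ * n :=
      Real.coe_toNNReal _ (mul_nonneg hδ (Nat.cast_nonneg n))
    rcases le_total s t with h | h
    · have := hglue n (s * n) (hmem s hs) (t * n) (hmem t ht)
        (mul_le_mul_of_nonneg_right h (Nat.cast_nonneg n))
      rw [Real.dist_eq, abs_of_nonpos (by linarith), hC]
      calc dist (F (s * n)) (F (t * n)) ≤ δ * (t * n - s * n) := this
      _ = δ * n * (-(s - t)) := by ring
    · have := hglue n (t * n) (hmem t ht) (s * n) (hmem s hs)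
        (mul_le_mul_of_nonneg_right h (Nat.cast_nonneg n))
      rw [dist_comm (F (s*n)), Real.dist_eq, abs_of_nonneg (by linarith), hC] at *
      calc dist (F (t * n)) (F (s * n)) ≤ δ * (s * n - t * n) := this
      _ = δ * n * (s - t) := by ring
  · show F ((0:ℝ) * n) = w 0
    rw [zero_mul, show (0:ℝ) = ((0:ℕ):ℝ) by norm_num, hFk]
  · show F ((1:ℝ) * n) = w n
    rw [one_mul, hFk]
  · intro s hs
    set u := s * n with hudef
    have hu0 : 0 ≤ u := mul_nonneg hs.1 (Nat.cast_nonneg n)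
    have hun : u ≤ (n : ℝ) := by
      calc u ≤ 1 * n := mul_le_mul_of_nonneg_right hs.2 (Nat.cast_nonneg n)
      _ = (n : ℝ) := one_mul _
    obtain ⟨k, hk, hku⟩ : ∃ k, k < n ∧ u ∈ Set.Icc (k:ℝ) (k + 1) := by
      by_cases h : ⌊u⌋₊ < n
      · exact ⟨⌊u⌋₊, h, ⟨Nat.floor_le hu0, (Nat.lt_floor_add_one u).le⟩⟩
      · push_neg at h
        have h1 : u = (n : ℝ) := by
          have : (n : ℝ) ≤ ⌊u⌋₊ := by exact_mod_cast h
          have h2 : (⌊u⌋₊ : ℝ) ≤ u := Nat.floor_le hu0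
          linarith
        refine ⟨n - 1, by omega, ?_⟩
        have : ((n - 1 : ℕ) : ℝ) = (n : ℝ) - 1 := by
          rw [Nat.cast_sub hn]; norm_num
        rw [this, h1]
        constructor <;> linarith
    refine ⟨k, hk, ?_⟩
    have hFu : F u = g k ((u - k) * d k) := hF k u hku
    set t := (u - k) * d k with htdef
    have ht : t ∈ Set.Icc 0 (d k) := by
      constructor
      · exact mul_nonneg (by linarith [hku.1]) (hd0 k)
      · calc t ≤ 1 * d k := mul_le_mul_of_nonneg_right (by linarith [hku.2]) (hd0 k)
        _ = d k := one_mul _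
    have hdw1 : dist (F u) (w k) = t := by
      conv_lhs => rw [hFu, ← hg0 k]
      rw [hgiso k t ht 0 ⟨le_refl _, hd0 k⟩]
      rw [sub_zero, abs_of_nonneg ht.1]
    have hdw2 : dist (F u) (w (k + 1)) = d k - t := by
      conv_lhs => rw [hFu, ← hg1 k]
      rw [hgiso k t ht (d k) ⟨hd0 k, le_refl _⟩]
      rw [abs_of_nonpos (by linarith [ht.2])]
      ring
    rcases le_total t (d k / 2) with h | h
    · left; rw [hdw1]; linarith [hd k]
    · right; rw [hdw2]; linarith [hd k]

/-- (abstracting a compact κ-dimensional Riemannian manifold `M` with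
boundary `B`, with its geodesic distance and volume measure). If every intrinsic ball
of radius `r ≤ δ < δ₀` centered at a point at distance `> δ` from the boundary has
measure at least `c·r^κ`, then any two points `p, q` in the same connected component of
`M^δ = {d(·,B) > δ}` are joined by a (piecewise geodesic) continuous path staying in
`M^{δ/2}` of length at most `δ·N_δ`, where `N_δ = max(4, 2^κ·|M|/(c·δ^κ))`. -/
theorem stmt19 (κ : ℕ) (M : Type*) [MetricSpace M] [CompactSpace M] [Nonempty M]
    [MeasurableSpace M] [BorelSpace M]
    (μ : Measure M) [IsFiniteMeasure μ]
    (B : Set M) (hB : IsClosed B)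
    (hgeo : ∀ x y : M, ∃ γ : ℝ → M, γ 0 = x ∧ γ (dist x y) = y ∧
      ∀ s ∈ Set.Icc 0 (dist x y), ∀ t ∈ Set.Icc 0 (dist x y), dist (γ s) (γ t) = |s - t|)
    (c δ₀ : ℝ) (hc : 0 < c) (hδ₀ : 0 < δ₀)
    (hball : ∀ δ : ℝ, δ < δ₀ → ∀ z : M, δ < Metric.infDist z B →
      ∀ r : ℝ, 0 < r → r ≤ δ → c * r ^ κ ≤ (μ (Metric.ball z r)).toReal)
    (δ : ℝ) (hδ : 0 < δ) (hδlt : δ < δ₀)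
    (p q : M) (hp : δ < Metric.infDist p B) (hq : δ < Metric.infDist q B)
    (hconn : ∃ C : Set M, IsConnected C ∧ C ⊆ {z | δ < Metric.infDist z B} ∧
      p ∈ C ∧ q ∈ C) :
    ∃ γ : ℝ → M, ContinuousOn γ (Set.Icc 0 1) ∧ γ 0 = p ∧ γ 1 = q ∧
      Set.MapsTo γ (Set.Icc 0 1) {z | δ / 2 < Metric.infDist z B} ∧
      eVariationOn γ (Set.Icc 0 1) ≤
        ENNReal.ofReal (δ * max 4 (2 ^ κ * (μ Set.univ).toReal / (c * δ ^ κ))) := by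
  classical
  obtain ⟨C, hC, hCsub, hpC, hqC⟩ := hconn
  set μu := (μ Set.univ).toReal with hμudef
  have hμu0 : 0 < μu := by
    have h1 : c * δ ^ κ ≤ (μ (Metric.ball p δ)).toReal := hball δ hδlt p hp δ hδ le_rfl
    have h2 : (μ (Metric.ball p δ)).toReal ≤ μu :=
      ENNReal.toReal_mono (measure_ne_top μ _) (measure_mono (subset_univ _))
    nlinarith [pow_pos hδ κ]
  set N' : ℝ := max 4 (2 ^ κ * μu / (c * δ ^ κ)) with hN'def
  have hN'4 : (4:ℝ) ≤ N' := le_max_left _ _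
  have hN2le : 2 ^ κ * μu / (c * δ ^ κ) ≤ N' := le_max_right _ _
  set K : ℕ := ⌊N'⌋₊ + 1 with hKdef
  have hKN : N' < (K : ℝ) := by
    rw [hKdef]
    push_cast
    exact Nat.lt_floor_add_one N'
  -- choose ε
  have hcont : Filter.Tendsto (fun ε : ℝ => 2 ^ κ * μu / (c * (δ - ε) ^ κ))
      (nhdsWithin 0 (Set.Ioi 0)) (nhds (2 ^ κ * μu / (c * δ ^ κ))) := by
    apply Filter.Tendsto.mono_left _ nhdsWithin_le_nhds
    have hc1 : ContinuousAt (fun ε : ℝ => 2 ^ κ * μu / (c * (δ - ε) ^ κ)) 0 := by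
      apply ContinuousAt.div continuousAt_const (by fun_prop)
      simp only [sub_zero]
      positivity
    simpa using hc1.tendsto
  have h1 : ∀ᶠ ε : ℝ in nhdsWithin 0 (Set.Ioi 0),
      2 ^ κ * μu / (c * (δ - ε) ^ κ) < (K : ℝ) :=
    hcont.eventually_lt_const (lt_of_le_of_lt hN2le hKN)
  have h2 : ∀ᶠ ε : ℝ in nhdsWithin 0 (Set.Ioi 0), ε ∈ Set.Ioo 0 δ :=
    Filter.eventually_of_mem (Ioo_mem_nhdsGT hδ) (fun x hx => hx)
  obtain ⟨ε, hεK, hεmem⟩ := (h1.and h2).exists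
  obtain ⟨hε0, hεδ⟩ := hεmem
  set θ : ℝ := δ - ε with hθdef
  have hθ0 : 0 < θ := by simp [hθdef]; linarith
  have hθδ : θ ≤ δ := by simp [hθdef]; linarith
  -- chain and prune
  obtain ⟨T, y, hy0, hyC, hystep, hyend⟩ := exists_chain_aux hC hpC hqC hε0
  obtain ⟨m, z, hz0, hzq, hidx, hcons, hsep⟩ := prune_chain hθ0.le q T y hystep hyend
  have hzC : ∀ k ≤ m, z k ∈ C := by
    intro k hk
    obtain ⟨s, _, hzs⟩ := hidx k hk
    rw [hzs]; exact hyC s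
  -- counting
  have hdisj : (↑(Finset.range (m + 1)) : Set ℕ).PairwiseDisjoint
      (fun k => Metric.ball (z k) (θ / 2)) := by
    intro j hj k hk hjk
    simp only [Finset.coe_range, Set.mem_Iio] at hj hk
    rcases lt_or_gt_of_ne hjk with h | h
    · exact ball_disjoint_ball (by linarith [hsep j k h (by omega)])
    · exact (ball_disjoint_ball (by linarith [hsep k j h (by omega)])).symm
  have hsum : ∑ k ∈ Finset.range (m + 1), μ (Metric.ball (z k) (θ / 2)) ≤ μ Set.univ := by
    rw [← measure_biUnion_finset hdisj (fun k _ => measurableSet_ball)]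
    exact measure_mono (subset_univ _)
  have hlow : ∀ k ∈ Finset.range (m + 1),
      c * (θ / 2) ^ κ ≤ (μ (Metric.ball (z k) (θ / 2))).toReal := by
    intro k hk
    simp only [Finset.mem_range] at hk
    exact hball δ hδlt (z k) (hCsub (hzC k (by omega))) (θ / 2) (by linarith) (by linarith)
  have hcount : (m + 1 : ℝ) * (c * (θ / 2) ^ κ) ≤ μu := by
    have e1 : (m + 1 : ℝ) * (c * (θ / 2) ^ κ)
        = ∑ _k ∈ Finset.range (m + 1), c * (θ / 2) ^ κ := by
      rw [Finset.sum_const, Finset.card_range]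
      push_cast; ring
    rw [e1]
    calc ∑ k ∈ Finset.range (m + 1), c * (θ / 2) ^ κ
        ≤ ∑ k ∈ Finset.range (m + 1), (μ (Metric.ball (z k) (θ / 2))).toReal :=
          Finset.sum_le_sum hlow
    _ = (∑ k ∈ Finset.range (m + 1), μ (Metric.ball (z k) (θ / 2))).toReal :=
          (ENNReal.toReal_sum (fun k _ => measure_ne_top μ _)).symm
    _ ≤ μu := ENNReal.toReal_mono (measure_ne_top μ _) hsum
  have hmN : (m + 1 : ℝ) ≤ N' := by
    have hpos2 : (0:ℝ) < c * θ ^ κ := by positivity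
    have h3 : (m + 1 : ℝ) ≤ 2 ^ κ * μu / (c * θ ^ κ) := by
      rw [le_div_iff₀ hpos2]
      have e2 : (θ / 2) ^ κ = θ ^ κ / 2 ^ κ := div_pow θ 2 κ
      have h4 := mul_le_mul_of_nonneg_left hcount
        (by positivity : (0:ℝ) ≤ 2 ^ κ)
      calc (m + 1 : ℝ) * (c * θ ^ κ)
          = 2 ^ κ * ((m + 1 : ℝ) * (c * (θ / 2) ^ κ)) := by
            rw [e2]; field_simp
      _ ≤ 2 ^ κ * μu := h4
    have h5 : (m + 1 : ℝ) < (K : ℝ) := lt_of_le_of_lt h3 hεK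
    have h6 : m + 1 < K := by exact_mod_cast h5
    have h7 : m + 1 ≤ ⌊N'⌋₊ := by omega
    calc (m + 1 : ℝ) ≤ (⌊N'⌋₊ : ℝ) := by exact_mod_cast h7
    _ ≤ N' := Nat.floor_le (by linarith)
  -- path
  set w : ℕ → M := fun k => if k ≤ m then z k else q with hwdef
  have hwC : ∀ k, w k ∈ C := by
    intro k
    by_cases h : k ≤ m <;> simp only [hwdef, h, if_true, if_false]
    · exact hzC k h
    · exact hqC
  have hwd : ∀ k, dist (w k) (w (k + 1)) ≤ δ := by
    intro k
    rcases lt_trichotomy k m with h | h | h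
    · have h1 : k ≤ m := h.le
      have h2 : k + 1 ≤ m := h
      simp only [hwdef, h1, h2, if_true]
      calc dist (z k) (z (k + 1)) ≤ θ + ε := hcons k h
      _ = δ := by rw [hθdef]; ring
    · subst h
      have h2 : ¬ (k + 1 ≤ k) := by omega
      simp only [hwdef, le_refl, if_true, h2, if_false]
      exact le_trans hzq hθδ
    · have h1 : ¬ (k ≤ m) := by omega
      have h2 : ¬ (k + 1 ≤ m) := by omega
      simp only [hwdef, h1, h2, if_false, dist_self]
      linarith
  obtain ⟨γ, hγlip, hγ0, hγ1, hγmem⟩ :=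
    polygonal_path hgeo (m + 1) (Nat.succ_pos m) w δ hδ.le hwd
  refine ⟨γ, hγlip.continuousOn, ?_, ?_, ?_, ?_⟩
  · rw [hγ0]; simp only [hwdef, Nat.zero_le, if_true]; rw [hz0, hy0]
  · rw [hγ1]; simp only [hwdef, Nat.lt_irrefl, if_neg (by omega : ¬ (m + 1 ≤ m))]
  · intro s hs
    obtain ⟨k, hk, hcase⟩ := hγmem s hs
    simp only [Set.mem_setOf_eq]
    rcases hcase with h | h
    · have he : δ < Metric.infDist (w k) B := hCsub (hwC k)
      have := Metric.infDist_le_infDist_add_dist (x := w k) (y := γ s) (s := B)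
      rw [dist_comm] at this
      linarith
    · have he : δ < Metric.infDist (w (k + 1)) B := hCsub (hwC (k + 1))
      have := Metric.infDist_le_infDist_add_dist (x := w (k + 1)) (y := γ s) (s := B)
      rw [dist_comm] at this
      linarith
  · have hvar : eVariationOn γ (Set.Icc 0 1) ≤
        (Real.toNNReal (δ * (m + 1)) : ENNReal) * eVariationOn (id : ℝ → ℝ) (Set.Icc 0 1) := by
      have := hγlip.comp_eVariationOn_le (g := (id : ℝ → ℝ)) (s := Set.Icc (0:ℝ) 1)
        (fun x hx => hx)
      simpa using this
    have hid : eVariationOn (id : ℝ → ℝ) (Set.Icc 0 1) ≤ ENNReal.ofReal 1 := by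
      have := (monotoneOn_id (s := Set.Icc (0:ℝ) 1)).eVariationOn_le
        (Set.left_mem_Icc.2 zero_le_one) (Set.right_mem_Icc.2 zero_le_one)
      simpa using this
    calc eVariationOn γ (Set.Icc 0 1)
        ≤ (Real.toNNReal (δ * (m + 1)) : ENNReal) * ENNReal.ofReal 1 :=
          le_trans hvar (mul_le_mul_right hid _)
    _ = ENNReal.ofReal (δ * (m + 1)) := by rw [ENNReal.ofReal_one, mul_one]; rfl
    _ ≤ ENNReal.ofReal (δ * N') :=
          ENNReal.ofReal_le_ofReal (mul_le_mul_of_nonneg_left (by push_cast; exact hmN) hδ.le)
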